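/- Let (H,R) be a finite-dimensional involutory quasitriangular Hopf algebra over a field k, with R = Σᵢ sᵢ ⊗ tᵢ, and let μ ∈ H* and e ∈ H be a two-sided integral and a two-sided cointegral with μ(e) = 1. Then in H ⊗ H: Σ₍ₑ₎ Σᵢ e₍₁₎·μ(e₍₂₎·sᵢ) ⊗ tᵢ = (S ⊗ id)(R) = R⁻¹. -/

import Mathlib

/-!
For a cointegral `e`, `Δe · Δc = ε(c) Δe`, so `Δe` absorbs the convolution factor `Δ` in
`Δ ⋆ (1 ⊗ S(-)) = (- ⊗ 1)` (which holds since `Δ = (- ⊗ 1) ⋆ (1 ⊗ -)` and `id ⋆ S = ηε`). This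
gives `Δe · (y ⊗ 1) = Δe · (1 ⊗ S y)`; with `S² = id` and `(id ⊗ μ)(Δe) = μ(e) = 1`, applying
`id ⊗ μ` to `Δe · (1 ⊗ s)` yields `S s`.

Applying `m ∘ (f ⊗ id)` to the first leg of `(Δ ⊗ id)(R) = R₁₃R₂₃` gives
`((f ⋆ id) ⊗ id)(R) = (f ⊗ id)(R) · R`. For `f = ηε` this forces `(ηε ⊗ id)(R) = 1` since `R` is
invertible, and then `f = S` shows that `(S ⊗ id)(R)` is the inverse of `R`.
-/

open TensorProduct Coalgebra HopfAlgebra WithConv Algebra.TensorProduct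

section Cointegral

variable {k H : Type*} [CommSemiring k] [Semiring H] [HopfAlgebra k H]

theorem comul_eq_includeLeft_convMul_includeRight :
    toConv (comul : H →ₗ[k] H ⊗[k] H) =
      toConv includeLeft.toLinearMap * toConv includeRight.toLinearMap := by
  ext x
  rw [(ℛ k x).convMul_apply]
  simp [tmul_mul_tmul, (ℛ k x).eq]

theorem comul_convMul_includeRight_comp_antipode :
    toConv (comul : H →ₗ[k] H ⊗[k] H) * toConv (includeRight.toLinearMap ∘ₗ antipode k) =
      toConv includeLeft.toLinearMap := by
  have hright : toConv (includeRight : H →ₐ[k] H ⊗[k] H).toLinearMap *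
      toConv (includeRight.toLinearMap ∘ₗ antipode k) = 1 := by
    have h := LinearMap.algHom_comp_convMul_distrib (includeRight : H →ₐ[k] H ⊗[k] H)
      (toConv LinearMap.id) (toConv (antipode k))
    rw [LinearMap.id_mul_antipode, LinearMap.convOne_def] at h
    ext x
    simpa only [LinearMap.comp_apply, Algebra.linearMap_apply, AlgHom.commutes,
      AlgHom.toLinearMap_apply, LinearMap.comp_id, LinearMap.convOne_apply] using congr($h x).symm
  rw [comul_eq_includeLeft_convMul_includeRight, mul_assoc, hright, mul_one]

theorem comul_mul_comul_convMul_apply {e : H} (he : ∀ x, e * x = counit (R := k) x • e)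
    (g : H →ₗ[k] H ⊗[k] H) (y : H) :
    comul e * (toConv (comul : H →ₗ[k] H ⊗[k] H) * toConv g) y = comul (R := k) e * g y := by
  have hcomul (c : H) : comul (R := k) e * comul c = counit (R := k) c • comul e := by
    rw [← Bialgebra.comul_mul, he, map_smul]
  let 𝓡 := ℛ k y
  calc comul e * (toConv (comul : H →ₗ[k] H ⊗[k] H) * toConv g) y
      = ∑ i ∈ 𝓡.index, comul (R := k) e * comul (𝓡.left i) * g (𝓡.right i) := by
        simp only [𝓡.convMul_apply, Finset.mul_sum, mul_assoc]
    _ = ∑ i ∈ 𝓡.index, counit (R := k) (𝓡.left i) • (comul (R := k) e * g (𝓡.right i)) := by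
        simp only [hcomul, smul_mul_assoc]
    _ = comul e * g y := by
        simp only [← mul_smul_comm, ← map_smul, ← Finset.mul_sum, ← map_sum, sum_counit_smul]

theorem comul_mul_tmul_one_eq_comul_mul_one_tmul_antipode {e : H}
    (he : ∀ x, e * x = counit (R := k) x • e) (y : H) :
    comul e * (y ⊗ₜ[k] 1) = comul (R := k) e * (1 ⊗ₜ antipode k y) := by
  have h := comul_mul_comul_convMul_apply he (includeRight.toLinearMap ∘ₗ antipode k) y
  rwa [comul_convMul_includeRight_comp_antipode] at h

theorem lTensor_mulRight_eq_mul_one_tmul (x : H) (u : H ⊗[k] H) :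
    LinearMap.lTensor H (LinearMap.mulRight k x) u = u * (1 ⊗ₜ x) := by
  induction u using TensorProduct.induction_on with
  | zero => simp
  | tmul a b => simp [tmul_mul_tmul]
  | add u v hu hv => simp [add_mul, hu, hv]

theorem rid_lTensor_mul_tmul_one (φ : Module.Dual k H) (u : H ⊗[k] H) (y : H) :
    TensorProduct.rid k H (LinearMap.lTensor H φ (u * (y ⊗ₜ 1))) =
      TensorProduct.rid k H (LinearMap.lTensor H φ u) * y := by
  induction u using TensorProduct.induction_on with
  | zero => simp
  | tmul a b => simp [tmul_mul_tmul]
  | add u v hu hv => simp [add_mul, hu, hv]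

theorem rid_lTensor_comp_mulRight_comul_eq_antipode
    (hinv : ∀ x : H, antipode k (antipode k x) = x) {e : H}
    (he : ∀ x, e * x = counit (R := k) x • e) {μ : Module.Dual k H}
    (hμe : TensorProduct.rid k H (LinearMap.lTensor H μ (comul e)) = 1) (x : H) :
    TensorProduct.rid k H (LinearMap.lTensor H (μ ∘ₗ LinearMap.mulRight k x) (comul e)) =
      antipode k x :=
  calc TensorProduct.rid k H (LinearMap.lTensor H (μ ∘ₗ LinearMap.mulRight k x) (comul e))
      = TensorProduct.rid k H (LinearMap.lTensor H μ (comul e * (1 ⊗ₜ x))) := by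
        rw [LinearMap.lTensor_comp_apply, lTensor_mulRight_eq_mul_one_tmul]
    _ = TensorProduct.rid k H (LinearMap.lTensor H μ (comul e * (antipode k x ⊗ₜ 1))) := by
        rw [comul_mul_tmul_one_eq_comul_mul_one_tmul_antipode he, hinv]
    _ = antipode k x := by
        rw [rid_lTensor_mul_tmul_one, hμe, one_mul]

end Cointegral

section RMatrix

variable {k H : Type*} [CommSemiring k] [Semiring H]

-- `rTensor ((mk k H H).flip 1)` and `rTensor (mk k H H 1)` place an element of `H ⊗ H` in the
-- legs `13` and `23` of `(H ⊗ H) ⊗ H`.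
theorem rTensor_mul'_rTensor_mul_leg13_leg23 [Algebra k H] (f : H →ₗ[k] H) (A B : H ⊗[k] H) :
    LinearMap.rTensor H (LinearMap.mul' k H ∘ₗ LinearMap.rTensor H f)
        (LinearMap.rTensor H ((TensorProduct.mk k H H).flip 1) A *
          LinearMap.rTensor H (TensorProduct.mk k H H 1) B) =
      LinearMap.rTensor H f A * B := by
  induction A using TensorProduct.induction_on with
  | zero => simp
  | add A A' hA hA' => simp only [map_add, add_mul, hA, hA']
  | tmul a c =>
    induction B using TensorProduct.induction_on with
    | zero => simp
    | add B B' hB hB' => simp only [map_add, mul_add, hB, hB']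
    | tmul b d => simp [tmul_mul_tmul]

variable [HopfAlgebra k H] {R : H ⊗[k] H}

theorem rTensor_convMul_id
    (hR : LinearMap.rTensor H (comul (R := k)) R =
      LinearMap.rTensor H ((TensorProduct.mk k H H).flip 1) R *
        LinearMap.rTensor H (TensorProduct.mk k H H 1) R) (f : H →ₗ[k] H) :
    LinearMap.rTensor H (toConv f * toConv LinearMap.id).ofConv R =
      LinearMap.rTensor H f R * R := by
  rw [← rTensor_mul'_rTensor_mul_leg13_leg23, ← hR, ← LinearMap.rTensor_comp_apply]
  rfl

theorem rTensor_antipode_mul_self (hRunit : IsUnit R)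
    (hR : LinearMap.rTensor H (comul (R := k)) R =
      LinearMap.rTensor H ((TensorProduct.mk k H H).flip 1) R *
        LinearMap.rTensor H (TensorProduct.mk k H H 1) R) :
    LinearMap.rTensor H (antipode k) R * R = 1 := by
  have hcounit : LinearMap.rTensor H (1 : WithConv (H →ₗ[k] H)).ofConv R = 1 :=
    hRunit.isRegular.right <| by
      simpa using (rTensor_convMul_id hR (1 : WithConv (H →ₗ[k] H)).ofConv).symm
  rw [← rTensor_convMul_id hR, LinearMap.antipode_mul_id, hcounit]

end RMatrix

theorem cointegral_formula_eq_antipode_R_eq_R_inv_general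
    {k H : Type*} [Field k] [Ring H] [HopfAlgebra k H]
    -- involutory
    (hinv : ∀ x : H, antipode (R := k) (antipode (R := k) x) = x)
    -- quasitriangular structure R
    (R : H ⊗[k] H)
    (hRunit : IsUnit R)
    (hR2 : LinearMap.rTensor H (Coalgebra.comul (R := k)) R
      = (LinearMap.rTensor H ((TensorProduct.mk k H H).flip 1) R)
        * (LinearMap.rTensor H (TensorProduct.mk k H H 1) R))
    -- two-sided integral and cointegral
    (μ : Module.Dual k H) (e : H)
    (hμ : ∀ x : H,
      TensorProduct.rid k H (LinearMap.lTensor H μ (comul (R := k) x)) = μ x • (1 : H) ∧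
      TensorProduct.lid k H (LinearMap.rTensor H μ (comul (R := k) x)) = μ x • (1 : H))
    (he : ∀ x : H, x * e = counit (R := k) x • e ∧ e * x = counit (R := k) x • e)
    (hμe : μ e = 1)
    -- θ : s ↦ Σ e₍₁₎ · μ(e₍₂₎ · s)
    (θ : H →ₗ[k] H)
    (hθ : ∀ s : H, θ s = TensorProduct.rid k H
      (LinearMap.lTensor H (μ ∘ₗ LinearMap.mulRight k s) (comul (R := k) e))) :
    LinearMap.rTensor H θ R = LinearMap.rTensor H (antipode (R := k)) R ∧
    (LinearMap.rTensor H (antipode (R := k)) R) * R = 1 ∧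
    R * (LinearMap.rTensor H (antipode (R := k)) R) = 1 := by
  have hθS : θ = antipode k := LinearMap.ext fun x => by
    rw [hθ]
    exact rid_lTensor_comp_mulRight_comul_eq_antipode hinv (fun x => (he x).2)
      (by rw [(hμ e).1, hμe, one_smul]) x
  have hleft := rTensor_antipode_mul_self hRunit hR2
  exact ⟨by rw [hθS], hleft, hRunit.isRegular.right.mul_eq_one_symm hleft⟩

/-- Let `(H,R)` be a finite-dimensional involutory quasitriangular Hopf algebra
over a field `k`, with `R = Σᵢ sᵢ ⊗ tᵢ`, and let `μ ∈ H*` and `e ∈ H` be a two-sided integral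
and a two-sided cointegral with `μ(e) = 1`.  Then in `H ⊗ H`:
`Σ₍ₑ₎ Σᵢ e₍₁₎·μ(e₍₂₎·sᵢ) ⊗ tᵢ = (S ⊗ id)(R) = R⁻¹`.
Here `θ : H →ₗ[k] H` is the linear map `s ↦ Σ₍ₑ₎ e₍₁₎·μ(e₍₂₎·s)`, so that the left-hand side
is `(θ ⊗ id)(R)`. -/
theorem cointegral_formula_eq_antipode_R_eq_R_inv
    {k H : Type*} [Field k] [Ring H] [HopfAlgebra k H] [FiniteDimensional k H]
    -- involutory
    (hinv : ∀ x : H, antipode (R := k) (antipode (R := k) x) = x)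
    -- quasitriangular structure R
    (R : H ⊗[k] H)
    (hRunit : IsUnit R)
    (hR1 : ∀ x : H,
      (TensorProduct.comm k H H (comul (R := k) x)) * R = R * comul (R := k) x)
    (hR2 : LinearMap.rTensor H (Coalgebra.comul (R := k)) R
      = (LinearMap.rTensor H ((TensorProduct.mk k H H).flip 1) R)
        * (LinearMap.rTensor H (TensorProduct.mk k H H 1) R))
    (hR3 : LinearMap.lTensor H (Coalgebra.comul (R := k)) R
      = (LinearMap.lTensor H (TensorProduct.mk k H H 1) R)
        * (LinearMap.lTensor H ((TensorProduct.mk k H H).flip 1) R))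
    -- two-sided integral and cointegral
    (μ : Module.Dual k H) (e : H)
    (hμ : ∀ x : H,
      TensorProduct.rid k H (LinearMap.lTensor H μ (comul (R := k) x)) = μ x • (1 : H) ∧
      TensorProduct.lid k H (LinearMap.rTensor H μ (comul (R := k) x)) = μ x • (1 : H))
    (he : ∀ x : H, x * e = counit (R := k) x • e ∧ e * x = counit (R := k) x • e)
    (hμe : μ e = 1)
    -- θ : s ↦ Σ e₍₁₎ · μ(e₍₂₎ · s)
    (θ : H →ₗ[k] H)
    (hθ : ∀ s : H, θ s = TensorProduct.rid k H
      (LinearMap.lTensor H (μ ∘ₗ LinearMap.mulRight k s) (comul (R := k) e))) :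
    LinearMap.rTensor H θ R = LinearMap.rTensor H (antipode (R := k)) R ∧
    (LinearMap.rTensor H (antipode (R := k)) R) * R = 1 ∧
    R * (LinearMap.rTensor H (antipode (R := k)) R) = 1 :=
  cointegral_formula_eq_antipode_R_eq_R_inv_general hinv R hRunit hR2 μ e hμ he hμe θ hθ
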